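/- arXiv:2307.10662 — 3 statements merged into one kernel-verified Lean document; each statement's English description precedes it below -/
import Mathlib

section
/- Let Γ be an infinite finitely generated group and let μ be an admissible probability measure on Γ. Suppose the random walk satisfies a Gaussian lower bound: there exist constants c, C > 0 and a function f : ℕ → (0,∞) with (1/k) log f(k) → 0 as k → ∞, such that p_k(e,x) ≥ C f(k) e^{−c|x|²/k} for all k ≥ 1 and all x ∈ Γ. Then Γ has subexponential growth (v = 0) and lim_{r↑1} ω_Γ(r) = 0. -/
open scoped Pointwise Classical
open Filter

namespace GreenGrowth

variable {G : Type*} [Group G]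

/-- Word length with respect to a finite generating set `S` (symmetrized). -/
noncomputable def wordLength (S : Finset G) (x : G) : ℕ :=
  sInf {n : ℕ | x ∈ ((S : Set G) ∪ (S : Set G)⁻¹) ^ n}

/-- `n`-step distribution of the `μ`-random walk: the `n`-fold convolution power of `μ`,
so that `p_n(x, y) = convPow μ n (x⁻¹ * y)`. -/
noncomputable def convPow (μ : G → ℝ) : ℕ → G → ℝ
  | 0 => fun x => if x = 1 then 1 else 0
  | n + 1 => fun x => ∑' y : G, μ y * convPow μ n (y⁻¹ * x)

/-- The Green function `G(e, x | r)`. -/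
noncomputable def green (μ : G → ℝ) (r : ℝ) (x : G) : ℝ :=
  ∑' n : ℕ, r ^ n * convPow μ n x

/-- `μ` is a probability measure on `G`. -/
def IsProbMeasure (μ : G → ℝ) : Prop := (∀ x, 0 ≤ μ x) ∧ HasSum μ 1

/-- `μ` is admissible: its support generates `G` as a semigroup, i.e. every element of `G`
is reached with positive probability at some time. -/
def IsAdmissible (μ : G → ℝ) : Prop := ∀ x : G, ∃ n : ℕ, 0 < convPow μ n x

/-- `μ` is symmetric. -/
def IsSymm (μ : G → ℝ) : Prop := ∀ x : G, μ x⁻¹ = μ x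

/-- The spectral radius of the `μ`-random walk. -/
noncomputable def spectralRadius (μ : G → ℝ) : ℝ :=
  limsup (fun n : ℕ => (convPow μ n 1) ^ ((n : ℝ)⁻¹)) atTop

/-- `R`, the radius of convergence of the Green function: the inverse of the
spectral radius. -/
noncomputable def greenRadius (μ : G → ℝ) : ℝ := (spectralRadius μ)⁻¹

/-- The `μ`-random walk is transient at the spectral radius: the Green function
`G(x, y | r)` is finite for all `x, y` and all `0 < r ≤ R`. -/
def TransientAtSpectralRadius (μ : G → ℝ) : Prop :=
  ∀ r : ℝ, 0 < r → r ≤ greenRadius μ →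
    ∀ x : G, Summable (fun n : ℕ => r ^ n * convPow μ n x)

/-- `H_r(n) = Σ_{x ∈ S_n} G(e, x | r)`, the sum of the Green function over the sphere
of radius `n`. -/
noncomputable def greenSphereSum (S : Finset G) (μ : G → ℝ) (r : ℝ) (n : ℕ) : ℝ :=
  ∑' x : G, if wordLength S x = n then green μ r x else 0

/-- `ω_Γ(r) = limsup (1/n) log H_r(n)`, the growth rate of the Green function. -/
noncomputable def greenGrowthRate (S : Finset G) (μ : G → ℝ) (r : ℝ) : ℝ :=
  limsup (fun n : ℕ => Real.log (greenSphereSum S μ r n) / n) atTop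

/-- The cardinality of the sphere of radius `n`. -/
noncomputable def sphereCard (S : Finset G) (n : ℕ) : ℕ :=
  Nat.card {x : G // wordLength S x = n}

/-- The volume growth rate `v = limsup (1/n) log #S_n`. -/
noncomputable def volumeGrowthRate (S : Finset G) : ℝ :=
  limsup (fun n : ℕ => Real.log (sphereCard S n) / n) atTop

end GreenGrowth

namespace GreenGrowth

variable {G : Type*} [Group G]

/-! ### Auxiliary lemmas on `convPow` -/

lemma convPow_nonneg {μ : G → ℝ} (h0 : ∀ x, 0 ≤ μ x) : ∀ (n : ℕ) (x : G), 0 ≤ convPow μ n x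
  | 0, x => by simp only [convPow]; split <;> norm_num
  | n + 1, x => by
      simp only [convPow]
      exact tsum_nonneg fun y => mul_nonneg (h0 y) (convPow_nonneg h0 n _)

lemma convPow_le_one {μ : G → ℝ} (hprob : IsProbMeasure μ) :
    ∀ (n : ℕ) (x : G), convPow μ n x ≤ 1
  | 0, x => by simp only [convPow]; split <;> norm_num
  | n + 1, x => by
      have hμs : Summable μ := hprob.2.summable
      have hsum : Summable fun y : G => μ y * convPow μ n (y⁻¹ * x) :=
        Summable.of_nonneg_of_le
          (fun y => mul_nonneg (hprob.1 y) (convPow_nonneg hprob.1 n _))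
          (fun y => mul_le_of_le_one_right (hprob.1 y) (convPow_le_one hprob n _)) hμs
      calc convPow μ (n + 1) x = ∑' y : G, μ y * convPow μ n (y⁻¹ * x) := rfl
        _ ≤ ∑' y : G, μ y := Summable.tsum_le_tsum
              (fun y => mul_le_of_le_one_right (hprob.1 y) (convPow_le_one hprob n _)) hsum hμs
        _ = 1 := hprob.2.tsum_eq

lemma summable_mul_convPow {μ : G → ℝ} (hprob : IsProbMeasure μ) (n : ℕ) (x : G) :
    Summable fun y : G => μ y * convPow μ n (y⁻¹ * x) :=
  Summable.of_nonneg_of_le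
    (fun y => mul_nonneg (hprob.1 y) (convPow_nonneg hprob.1 n _))
    (fun y => mul_le_of_le_one_right (hprob.1 y) (convPow_le_one hprob n _)) hprob.2.summable

lemma sum_convPow_le_one {μ : G → ℝ} (hprob : IsProbMeasure μ) :
    ∀ (n : ℕ) (F : Finset G), ∑ x ∈ F, convPow μ n x ≤ 1
  | 0, F => by
      simp only [convPow]
      rw [Finset.sum_ite_eq' F (1 : G) (fun _ => (1 : ℝ))]
      split <;> norm_num
  | n + 1, F => by
      have hμs : Summable μ := hprob.2.summable
      have hinner : ∀ y : G, ∑ x ∈ F, convPow μ n (y⁻¹ * x) ≤ 1 := by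
        intro y
        have himg : ∑ x ∈ F, convPow μ n (y⁻¹ * x)
            = ∑ x ∈ F.image (fun z => y⁻¹ * z), convPow μ n x := by
          rw [Finset.sum_image (fun a _ b _ h => mul_left_cancel h)]
        rw [himg]; exact sum_convPow_le_one hprob n _
      have hinner0 : ∀ y : G, 0 ≤ ∑ x ∈ F, convPow μ n (y⁻¹ * x) := fun y =>
        Finset.sum_nonneg fun x _ => convPow_nonneg hprob.1 n _
      have hsl : Summable fun y : G => μ y * ∑ x ∈ F, convPow μ n (y⁻¹ * x) :=
        Summable.of_nonneg_of_le (fun y => mul_nonneg (hprob.1 y) (hinner0 y))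
          (fun y => mul_le_of_le_one_right (hprob.1 y) (hinner y)) hμs
      calc ∑ x ∈ F, convPow μ (n + 1) x
          = ∑ x ∈ F, ∑' y : G, μ y * convPow μ n (y⁻¹ * x) := rfl
        _ = ∑' y : G, ∑ x ∈ F, μ y * convPow μ n (y⁻¹ * x) :=
            (Summable.tsum_finsetSum (fun x _ => summable_mul_convPow hprob n x)).symm
        _ = ∑' y : G, μ y * ∑ x ∈ F, convPow μ n (y⁻¹ * x) := by
            congr 1; funext y; rw [Finset.mul_sum]
        _ ≤ ∑' y : G, μ y := Summable.tsum_le_tsum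
            (fun y => mul_le_of_le_one_right (hprob.1 y) (hinner y)) hsl hμs
        _ = 1 := hprob.2.tsum_eq

/-! ### Auxiliary lemmas on word length and spheres -/

lemma pow_finite (S : Finset G) (n : ℕ) : (((S : Set G) ∪ (S : Set G)⁻¹) ^ n).Finite := by
  have : ((S : Set G) ∪ (S : Set G)⁻¹) = ((S ∪ S⁻¹ : Finset G) : Set G) := by
    simp [Finset.coe_union, Finset.coe_inv]
  rw [this, ← Finset.coe_pow]
  exact Finset.finite_toSet _

lemma exists_mem_pow (S : Finset G) (hS : Subgroup.closure (S : Set G) = ⊤) (x : G) :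
    ∃ n, x ∈ ((S : Set G) ∪ (S : Set G)⁻¹) ^ n := by
  set T := (S : Set G) ∪ (S : Set G)⁻¹ with hT
  have hTinv : T⁻¹ = T := by
    rw [hT, Set.union_inv, inv_inv, Set.union_comm]
  let H : Subgroup G :=
    { carrier := ⋃ n, T ^ n
      one_mem' := Set.mem_iUnion.2 ⟨0, by simp⟩
      mul_mem' := by
        intro a b ha hb
        obtain ⟨m, hm⟩ := Set.mem_iUnion.1 ha
        obtain ⟨k, hk⟩ := Set.mem_iUnion.1 hb
        exact Set.mem_iUnion.2 ⟨m + k, by rw [pow_add]; exact Set.mul_mem_mul hm hk⟩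
      inv_mem' := by
        intro a ha
        obtain ⟨m, hm⟩ := Set.mem_iUnion.1 ha
        refine Set.mem_iUnion.2 ⟨m, ?_⟩
        have : a⁻¹ ∈ (T ^ m)⁻¹ := Set.inv_mem_inv.2 hm
        rwa [← inv_pow, hTinv] at this }
  have hsub : (S : Set G) ⊆ H.carrier := by
    intro s hs
    exact Set.mem_iUnion.2 ⟨1, by rw [pow_one]; exact Or.inl hs⟩
  have hle : Subgroup.closure (S : Set G) ≤ H := (Subgroup.closure_le H).2 hsub
  have hx : x ∈ H := hle (hS ▸ Subgroup.mem_top x)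
  exact Set.mem_iUnion.1 hx

lemma mem_pow_wordLength (S : Finset G) (hS : Subgroup.closure (S : Set G) = ⊤) (x : G) :
    x ∈ ((S : Set G) ∪ (S : Set G)⁻¹) ^ wordLength S x :=
  Nat.sInf_mem (exists_mem_pow S hS x)

lemma wordLength_le (S : Finset G) {x : G} {n : ℕ}
    (h : x ∈ ((S : Set G) ∪ (S : Set G)⁻¹) ^ n) : wordLength S x ≤ n :=
  Nat.sInf_le h

lemma sphere_finite (S : Finset G) (hS : Subgroup.closure (S : Set G) = ⊤) (n : ℕ) :
    {x : G | wordLength S x = n}.Finite :=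
  (pow_finite S n).subset fun x hx => by
    have := mem_pow_wordLength S hS x
    rwa [hx] at this

lemma exists_wordLength_pred (S : Finset G) (hS : Subgroup.closure (S : Set G) = ⊤)
    {x : G} {n : ℕ} (hx : wordLength S x = n + 1) : ∃ y : G, wordLength S y = n := by
  have hxmem : x ∈ ((S : Set G) ∪ (S : Set G)⁻¹) ^ (n + 1) := by
    have := mem_pow_wordLength S hS x; rwa [hx] at this
  rw [pow_succ] at hxmem
  obtain ⟨u, hu, t, ht, heq⟩ := Set.mem_mul.1 hxmem
  subst heq
  have h1 : wordLength S u ≤ n := wordLength_le S hu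
  have h2 : u * t ∈ ((S : Set G) ∪ (S : Set G)⁻¹) ^ (wordLength S u + 1) := by
    rw [pow_succ]; exact Set.mul_mem_mul (mem_pow_wordLength S hS u) ht
  have h3 : n + 1 ≤ wordLength S u + 1 := by
    have := wordLength_le S h2; omega
  exact ⟨u, by omega⟩

lemma exists_wordLength_eq [Infinite G] (S : Finset G)
    (hS : Subgroup.closure (S : Set G) = ⊤) (n : ℕ) : ∃ x : G, wordLength S x = n := by
  have key : ∀ k : ℕ, ∀ m : ℕ, m ≤ k → (∃ x : G, wordLength S x = k) →
      ∃ y : G, wordLength S y = m := by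
    intro k
    induction k with
    | zero => intro m hm h; exact Nat.le_zero.1 hm ▸ h
    | succ k ih =>
        intro m hm hx
        obtain ⟨x, hx⟩ := hx
        rcases Nat.eq_or_lt_of_le hm with rfl | hlt
        · exact ⟨x, hx⟩
        · exact ih m (Nat.lt_succ_iff.1 hlt) (exists_wordLength_pred S hS hx)
  have hball : (⋃ m ∈ Finset.range (n + 1), ((S : Set G) ∪ (S : Set G)⁻¹) ^ m).Finite :=
    Set.Finite.biUnion (Finset.finite_toSet _) (fun m _ => pow_finite S m)
  obtain ⟨x, hx⟩ := hball.infinite_compl.nonempty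
  have hxgt : n < wordLength S x := by
    by_contra h
    push_neg at h
    exact hx (Set.mem_biUnion (Finset.mem_range.2 (by omega)) (mem_pow_wordLength S hS x))
  exact key _ n (le_of_lt hxgt) ⟨x, rfl⟩

lemma sphereCard_eq (S : Finset G) (hS : Subgroup.closure (S : Set G) = ⊤) (n : ℕ) :
    sphereCard S n = (sphere_finite S hS n).toFinset.card := by
  unfold sphereCard
  rw [← Set.ncard_eq_toFinset_card _ (sphere_finite S hS n)]
  exact Nat.card_coe_set_eq _

lemma greenSphereSum_eq (S : Finset G) (hS : Subgroup.closure (S : Set G) = ⊤)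
    (μ : G → ℝ) (r : ℝ) (n : ℕ) :
    greenSphereSum S μ r n = ∑ x ∈ (sphere_finite S hS n).toFinset, green μ r x := by
  unfold greenSphereSum
  refine (tsum_eq_sum (s := (sphere_finite S hS n).toFinset) ?_).trans ?_
  · exact fun x hx => if_neg (fun h => hx ((sphere_finite S hS n).mem_toFinset.2 h))
  · exact Finset.sum_congr rfl fun x hx => if_pos ((sphere_finite S hS n).mem_toFinset.1 hx)

/-! ### Green function bounds -/

lemma summable_green {μ : G → ℝ} (hprob : IsProbMeasure μ) {r : ℝ} (h0 : 0 ≤ r) (h1 : r < 1)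
    (x : G) : Summable fun n : ℕ => r ^ n * convPow μ n x :=
  Summable.of_nonneg_of_le
    (fun n => mul_nonneg (pow_nonneg h0 n) (convPow_nonneg hprob.1 n x))
    (fun n => mul_le_of_le_one_right (pow_nonneg h0 n) (convPow_le_one hprob n x))
    (summable_geometric_of_lt_one h0 h1)

lemma green_nonneg {μ : G → ℝ} (hprob : IsProbMeasure μ) {r : ℝ} (h0 : 0 ≤ r) (x : G) :
    0 ≤ green μ r x :=
  tsum_nonneg fun n => mul_nonneg (pow_nonneg h0 n) (convPow_nonneg hprob.1 n x)

lemma green_le_inv {μ : G → ℝ} (hprob : IsProbMeasure μ) {r : ℝ} (h0 : 0 ≤ r) (h1 : r < 1)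
    (x : G) : green μ r x ≤ (1 - r)⁻¹ := by
  calc green μ r x ≤ ∑' n : ℕ, r ^ n :=
        Summable.tsum_le_tsum (fun n => mul_le_of_le_one_right (pow_nonneg h0 n) (convPow_le_one hprob n x))
          (summable_green hprob h0 h1 x) (summable_geometric_of_lt_one h0 h1)
    _ = (1 - r)⁻¹ := tsum_geometric_of_lt_one h0 h1

lemma le_green {μ : G → ℝ} (hprob : IsProbMeasure μ) {r : ℝ} (h0 : 0 ≤ r) (h1 : r < 1)
    (k : ℕ) (x : G) : r ^ k * convPow μ k x ≤ green μ r x :=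
  Summable.le_tsum (summable_green hprob h0 h1 x) k
    (fun n _ => mul_nonneg (pow_nonneg h0 n) (convPow_nonneg hprob.1 n x))

/-! ### limsup helpers -/

lemma limsup_zero_of (u : ℕ → ℝ) (h1 : ∀ᶠ n in atTop, 0 ≤ u n)
    (h2 : ∀ ε : ℝ, 0 < ε → ∀ᶠ n in atTop, u n ≤ ε) : limsup u atTop = 0 := by
  have hb : IsBoundedUnder (· ≤ ·) atTop u := ⟨1, by
    rw [eventually_map]; exact h2 1 one_pos⟩
  have hcb : IsCoboundedUnder (· ≤ ·) atTop u := isCoboundedUnder_le_of_eventually_le atTop h1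
  apply le_antisymm
  · apply le_of_forall_pos_le_add
    intro ε hε
    have := limsup_le_of_le hcb (h2 ε hε)
    linarith
  · exact le_limsup_of_frequently_le h1.frequently hb

lemma le_limsup_of_eventually (u : ℕ → ℝ) (b : ℝ)
    (hb : ∀ δ : ℝ, 0 < δ → ∀ᶠ n in atTop, b - δ ≤ u n)
    (hbdd : IsBoundedUnder (· ≤ ·) atTop u) : b ≤ limsup u atTop := by
  apply le_of_forall_pos_le_add
  intro δ hδ
  have := le_limsup_of_frequently_le ((hb δ hδ).frequently) hbdd
  linarith

lemma limsup_le_zero_of (u : ℕ → ℝ) (hcb : IsCoboundedUnder (· ≤ ·) atTop u)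
    (h2 : ∀ ε : ℝ, 0 < ε → ∀ᶠ n in atTop, u n ≤ ε) : limsup u atTop ≤ 0 := by
  apply le_of_forall_pos_le_add
  intro ε hε
  have := limsup_le_of_le hcb (h2 ε hε)
  linarith

lemma tendsto_logf_mul {f : ℕ → ℝ}
    (hfsub : Tendsto (fun k : ℕ => Real.log (f k) / k) atTop (nhds 0))
    (m : ℕ) (hm : 1 ≤ m) :
    Tendsto (fun n : ℕ => Real.log (f (m * n)) / n) atTop (nhds 0) := by
  have h1 : Tendsto (fun n : ℕ => m * n) atTop atTop :=
    tendsto_atTop_atTop.2 fun b => ⟨b, fun a ha => ha.trans (Nat.le_mul_of_pos_left a (by omega))⟩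
  have h2 : Tendsto (fun n : ℕ => (m : ℝ) * (Real.log (f (m * n)) / (m * n : ℕ))) atTop
      (nhds 0) := by
    simpa using (hfsub.comp h1).const_mul (m : ℝ)
  apply h2.congr'
  filter_upwards [eventually_ge_atTop 1] with n hn
  have hn0 : (n : ℝ) ≠ 0 := Nat.cast_ne_zero.2 (by omega)
  have hm0 : (m : ℝ) ≠ 0 := Nat.cast_ne_zero.2 (by omega)
  push_cast
  field_simp

end GreenGrowth

namespace GreenGrowth

/-- Let `Γ` be an infinite finitely generated group and `μ` an admissible
probability measure on `Γ` satisfying a Gaussian lower bound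
`p_k(e,x) ≥ C f(k) e^{−c|x|²/k}` where `f` is sub-exponential.  Then `Γ` has
subexponential growth (`v = 0`) and `ω_Γ(r) → 0` as `r ↑ 1`. -/
theorem subexp_growth_of_gaussian_lower_bound {G : Type*} [Group G] [Infinite G]
    (S : Finset G) (hS : Subgroup.closure (S : Set G) = ⊤) (μ : G → ℝ)
    (hprob : IsProbMeasure μ) (hadm : IsAdmissible μ)
    (c C : ℝ) (hc : 0 < c) (hC : 0 < C) (f : ℕ → ℝ) (hf : ∀ k, 0 < f k)
    (hfsub : Tendsto (fun k : ℕ => Real.log (f k) / k) atTop (nhds 0))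
    (hgauss : ∀ k : ℕ, 1 ≤ k → ∀ x : G,
      C * f k * Real.exp (-c * (wordLength S x : ℝ) ^ 2 / k) ≤ convPow μ k x) :
    volumeGrowthRate S = 0 ∧
      Tendsto (fun r : ℝ => greenGrowthRate S μ r)
        (nhdsWithin 1 (Set.Iio 1)) (nhds 0) := by
  -- sphere cardinality positivity
  have hcard_pos : ∀ n : ℕ, 1 ≤ sphereCard S n := by
    intro n
    obtain ⟨x, hx⟩ := exists_wordLength_eq S hS n
    rw [sphereCard_eq S hS n]
    exact Finset.card_pos.2 ⟨x, (sphere_finite S hS n).mem_toFinset.2 hx⟩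
  -- counting bound
  have hcount : ∀ n k : ℕ, 1 ≤ k →
      (sphereCard S n : ℝ) * (C * f k * Real.exp (-c * (n : ℝ) ^ 2 / k)) ≤ 1 := by
    intro n k hk
    have h1 : (sphere_finite S hS n).toFinset.card • (C * f k * Real.exp (-c * (n : ℝ) ^ 2 / k))
        ≤ ∑ x ∈ (sphere_finite S hS n).toFinset, convPow μ k x := by
      apply Finset.card_nsmul_le_sum
      intro x hx
      have hwx : wordLength S x = n := (sphere_finite S hS n).mem_toFinset.1 hx
      have := hgauss k hk x
      rwa [hwx] at this
    rw [nsmul_eq_mul] at h1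
    rw [sphereCard_eq S hS n]
    exact h1.trans (sum_convPow_le_one hprob k _)
  -- log bound for sphere card
  have hlogN : ∀ n k : ℕ, 1 ≤ k → Real.log (sphereCard S n)
      ≤ c * (n : ℝ) ^ 2 / k - Real.log C - Real.log (f k) := by
    intro n k hk
    have hN1 : (1 : ℝ) ≤ (sphereCard S n : ℝ) := by exact_mod_cast hcard_pos n
    have hNpos : (0 : ℝ) < (sphereCard S n : ℝ) := by linarith
    have hprod := hcount n k hk
    have hCfk : (0 : ℝ) < C * f k := mul_pos hC (hf k)
    have hall : (0 : ℝ) < C * f k * Real.exp (-c * (n : ℝ) ^ 2 / k) :=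
      mul_pos hCfk (Real.exp_pos _)
    have hlog := Real.log_nonpos (by positivity) hprod
    rw [Real.log_mul (ne_of_gt hNpos) hall.ne',
        Real.log_mul hCfk.ne' (Real.exp_pos _).ne',
        Real.log_mul (ne_of_gt hC) (ne_of_gt (hf k)), Real.log_exp] at hlog
    have hrw : -c * (n : ℝ) ^ 2 / (k : ℝ) = -(c * (n : ℝ) ^ 2 / k) := by ring
    rw [hrw] at hlog
    linarith
  -- eventual bound on log N / n
  have hv : ∀ ε : ℝ, 0 < ε → ∀ᶠ n : ℕ in atTop, Real.log (sphereCard S n) / n ≤ ε := by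
    intro ε hε
    obtain ⟨m, hmgt⟩ := exists_nat_gt (2 * c / ε)
    set M := max m 1 with hMdef
    have hM1 : 1 ≤ M := le_max_right m 1
    have hMpos : (0 : ℝ) < (M : ℝ) := by exact_mod_cast hM1
    have hcM : c / M ≤ ε / 2 := by
      have hlt : (2 * c / ε) < (M : ℝ) := lt_of_lt_of_le hmgt (by exact_mod_cast le_max_left m 1)
      rw [div_lt_iff₀ hε] at hlt
      rw [div_le_div_iff₀ hMpos (by norm_num : (0 : ℝ) < 2)]
      nlinarith
    have hev1 : ∀ᶠ n : ℕ in atTop, (-Real.log C) / (n : ℝ) < ε / 4 :=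
      (tendsto_const_div_atTop_nhds_zero_nat (-Real.log C)).eventually
        (eventually_lt_nhds (by linarith))
    have hev2 : ∀ᶠ n : ℕ in atTop, -(ε / 4) < Real.log (f (M * n)) / n :=
      (tendsto_logf_mul hfsub M hM1).eventually (eventually_gt_nhds (by linarith))
    filter_upwards [hev1, hev2, eventually_ge_atTop 1] with n h1 h2 hn1
    have hn0 : (0 : ℝ) < (n : ℝ) := by exact_mod_cast hn1
    have hk : 1 ≤ M * n := Nat.mul_pos (by omega) (by omega)
    have hbound := hlogN n (M * n) hk
    have harith : c * (n : ℝ) ^ 2 / ((M * n : ℕ) : ℝ) = (c / M) * n := by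
      push_cast
      field_simp
    rw [harith] at hbound
    rw [div_le_iff₀ hn0]
    have e1 : -Real.log C < ε / 4 * n := (div_lt_iff₀ hn0).1 h1
    have e2 : -(ε / 4) * n < Real.log (f (M * n)) := (lt_div_iff₀ hn0).1 h2
    have e3 : (c / M) * n ≤ (ε / 2) * n := mul_le_mul_of_nonneg_right hcM hn0.le
    linarith
  -- Volume growth rate is zero
  have hvol : volumeGrowthRate S = 0 :=
    limsup_zero_of _ (Eventually.of_forall fun n =>
      div_nonneg (Real.log_nonneg (by exact_mod_cast hcard_pos n)) (Nat.cast_nonneg n)) hv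
  -- Bounds on the Green sphere sum
  have hHle : ∀ r : ℝ, 0 ≤ r → r < 1 → ∀ n : ℕ,
      greenSphereSum S μ r n ≤ (sphereCard S n : ℝ) * (1 - r)⁻¹ := by
    intro r h0 h1 n
    rw [greenSphereSum_eq S hS, sphereCard_eq S hS]
    have := Finset.sum_le_card_nsmul ((sphere_finite S hS n).toFinset) _ ((1 - r)⁻¹)
      (fun x _ => green_le_inv hprob h0 h1 x)
    rwa [nsmul_eq_mul] at this
  have hHge : ∀ r : ℝ, 0 ≤ r → r < 1 → ∀ n k : ℕ, 1 ≤ k →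
      r ^ k * (C * f k * Real.exp (-c * (n : ℝ) ^ 2 / k)) ≤ greenSphereSum S μ r n := by
    intro r h0 h1 n k hk
    obtain ⟨x, hx⟩ := exists_wordLength_eq S hS n
    rw [greenSphereSum_eq S hS]
    have hmem : x ∈ (sphere_finite S hS n).toFinset := (sphere_finite S hS n).mem_toFinset.2 hx
    have h2 : green μ r x ≤ ∑ y ∈ (sphere_finite S hS n).toFinset, green μ r y :=
      Finset.single_le_sum (fun y _ => green_nonneg hprob h0 y) hmem
    have hg := hgauss k hk x
    rw [hx] at hg
    have h3 : r ^ k * (C * f k * Real.exp (-c * (n : ℝ) ^ 2 / k)) ≤ r ^ k * convPow μ k x :=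
      mul_le_mul_of_nonneg_left hg (pow_nonneg h0 k)
    have h4 := le_green hprob h0 h1 k x
    linarith
  have hHpos : ∀ r : ℝ, 0 < r → r < 1 → ∀ n : ℕ, 1 ≤ n → 0 < greenSphereSum S μ r n := by
    intro r h0 h1 n hn
    have hge := hHge r h0.le h1 n n hn
    have hpos : 0 < r ^ n * (C * f n * Real.exp (-c * (n : ℝ) ^ 2 / n)) :=
      mul_pos (pow_pos h0 n) (mul_pos (mul_pos hC (hf n)) (Real.exp_pos _))
    linarith
  -- upper eventual bound on ω terms
  have hωle : ∀ r : ℝ, 0 < r → r < 1 → ∀ ε : ℝ, 0 < ε →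
      ∀ᶠ n : ℕ in atTop, Real.log (greenSphereSum S μ r n) / n ≤ ε := by
    intro r h0 h1 ε hε
    have hev3 : ∀ᶠ n : ℕ in atTop, Real.log ((1 - r)⁻¹) / (n : ℝ) < ε / 2 :=
      (tendsto_const_div_atTop_nhds_zero_nat _).eventually (eventually_lt_nhds (by linarith))
    filter_upwards [hv (ε / 2) (by linarith), hev3, eventually_ge_atTop 1] with n h2 h3 hn1
    have hn0 : (0 : ℝ) < (n : ℝ) := by exact_mod_cast hn1
    have hH := hHle r h0.le h1 n
    have hHp := hHpos r h0 h1 n hn1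
    have hN1 : (1 : ℝ) ≤ (sphereCard S n : ℝ) := by exact_mod_cast hcard_pos n
    have hlog : Real.log (greenSphereSum S μ r n)
        ≤ Real.log (sphereCard S n) + Real.log ((1 - r)⁻¹) := by
      calc Real.log (greenSphereSum S μ r n)
          ≤ Real.log ((sphereCard S n : ℝ) * (1 - r)⁻¹) := Real.log_le_log hHp hH
        _ = _ := Real.log_mul (by linarith) (inv_pos.2 (by linarith : (0:ℝ) < 1 - r)).ne'
    rw [div_le_iff₀ hn0]
    have e2 : Real.log (sphereCard S n) ≤ ε / 2 * n := (div_le_iff₀ hn0).1 h2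
    have e3 : Real.log ((1 - r)⁻¹) < ε / 2 * n := (div_lt_iff₀ hn0).1 h3
    linarith
  -- lower eventual bound on ω terms
  have hωge_ev : ∀ r : ℝ, 0 < r → r < 1 → ∀ m : ℕ, 1 ≤ m → ∀ δ : ℝ, 0 < δ →
      ∀ᶠ n : ℕ in atTop,
        (m : ℝ) * Real.log r - c / m - δ ≤ Real.log (greenSphereSum S μ r n) / n := by
    intro r h0 h1 m hm δ hδ
    have hev1 : ∀ᶠ n : ℕ in atTop, -(δ / 2) < Real.log C / (n : ℝ) :=
      (tendsto_const_div_atTop_nhds_zero_nat _).eventually (eventually_gt_nhds (by linarith))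
    have hev2 : ∀ᶠ n : ℕ in atTop, -(δ / 2) < Real.log (f (m * n)) / n :=
      (tendsto_logf_mul hfsub m hm).eventually (eventually_gt_nhds (by linarith))
    filter_upwards [hev1, hev2, eventually_ge_atTop 1] with n h1' h2' hn1
    have hn0 : (0 : ℝ) < (n : ℝ) := by exact_mod_cast hn1
    have hk : 1 ≤ m * n := Nat.mul_pos (by omega) (by omega)
    have hH := hHge r h0.le h1 n (m * n) hk
    have hHp := hHpos r h0 h1 n hn1
    have hCfk : (0 : ℝ) < C * f (m * n) := mul_pos hC (hf _)
    have hall : (0 : ℝ) < C * f (m * n) * Real.exp (-c * (n : ℝ) ^ 2 / ((m * n : ℕ) : ℝ)) :=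
      mul_pos hCfk (Real.exp_pos _)
    have hlhs_pos :
        0 < r ^ (m * n) * (C * f (m * n) * Real.exp (-c * (n : ℝ) ^ 2 / ((m * n : ℕ) : ℝ))) :=
      mul_pos (pow_pos h0 _) hall
    have hlog := Real.log_le_log hlhs_pos hH
    rw [Real.log_mul (ne_of_gt (pow_pos h0 _)) hall.ne',
        Real.log_mul hCfk.ne' (Real.exp_pos _).ne',
        Real.log_mul (ne_of_gt hC) (ne_of_gt (hf _)), Real.log_exp, Real.log_pow] at hlog
    have e1 : ((m * n : ℕ) : ℝ) * Real.log r = ((m : ℝ) * Real.log r) * n := by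
      push_cast; ring
    have e2 : -c * (n : ℝ) ^ 2 / ((m * n : ℕ) : ℝ) = -(c / m) * n := by
      push_cast
      field_simp
    rw [e1, e2] at hlog
    rw [le_div_iff₀ hn0]
    have e3 : -(δ / 2) * n < Real.log C := (lt_div_iff₀ hn0).1 h1'
    have e4 : -(δ / 2) * n < Real.log (f (m * n)) := (lt_div_iff₀ hn0).1 h2'
    nlinarith
  -- ω(r) bounds
  have hωge : ∀ r : ℝ, 0 < r → r < 1 → ∀ m : ℕ, 1 ≤ m →
      (m : ℝ) * Real.log r - c / m ≤ greenGrowthRate S μ r := by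
    intro r h0 h1 m hm
    apply le_limsup_of_eventually _ _ (fun δ hδ => hωge_ev r h0 h1 m hm δ hδ)
    exact ⟨1, by rw [eventually_map]; exact hωle r h0 h1 1 one_pos⟩
  have hωle0 : ∀ r : ℝ, 0 < r → r < 1 → greenGrowthRate S μ r ≤ 0 := by
    intro r h0 h1
    apply limsup_le_zero_of _ ?_ (hωle r h0 h1)
    exact isCoboundedUnder_le_of_eventually_le atTop (hωge_ev r h0 h1 1 le_rfl 1 one_pos)
  refine ⟨hvol, ?_⟩
  rw [Metric.tendsto_nhdsWithin_nhds]
  intro ε hε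
  obtain ⟨m, hmgt⟩ := exists_nat_gt (2 * c / ε)
  set M := max m 1 with hMdef
  have hM1 : 1 ≤ M := le_max_right m 1
  have hMpos : (0 : ℝ) < (M : ℝ) := by exact_mod_cast hM1
  have hcM : c / M ≤ ε / 2 := by
    have hlt : (2 * c / ε) < (M : ℝ) := lt_of_lt_of_le hmgt (by exact_mod_cast le_max_left m 1)
    rw [div_lt_iff₀ hε] at hlt
    rw [div_le_div_iff₀ hMpos (by norm_num : (0 : ℝ) < 2)]
    nlinarith
  have hexplt : Real.exp (-(ε / (2 * M))) < 1 := Real.exp_lt_one_iff.2 (by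
    rw [neg_lt_zero]; positivity)
  refine ⟨1 - Real.exp (-(ε / (2 * M))), by linarith, ?_⟩
  intro x hx hdist
  have hx1 : x < 1 := hx
  have hdist' : 1 - x < 1 - Real.exp (-(ε / (2 * M))) := by
    rw [Real.dist_eq, abs_of_neg (by linarith : x - 1 < 0), neg_sub] at hdist
    exact hdist
  have hxgt : Real.exp (-(ε / (2 * M))) < x := by linarith
  have hx0 : 0 < x := lt_trans (Real.exp_pos _) hxgt
  have hlogx : -(ε / (2 * M)) < Real.log x := (Real.lt_log_iff_exp_lt hx0).2 hxgt
  have hub := hωle0 x hx0 hx1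
  have hlb := hωge x hx0 hx1 M hM1
  have h5 : -(ε / 2) < (M : ℝ) * Real.log x := by
    have hmul := mul_lt_mul_of_pos_left hlogx hMpos
    have heq : (M : ℝ) * (-(ε / (2 * M))) = -(ε / 2) := by field_simp
    linarith [hmul, heq.ge]
  rw [Real.dist_eq, sub_zero, abs_lt]
  constructor
  · linarith
  · linarith


end GreenGrowth
end

section
/- For any real numbers a > 1 and b, c > 0 there exists a constant K > 0 such that Σ_{n≥1} c n^{−a} e^{−b u / n} ∼ K u^{−(a−1)} as u → ∞; that is, the ratio of the left-hand side to K u^{−(a−1)} tends to 1 as u → ∞. -/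
open Filter MeasureTheory Set
open scoped ENNReal

section RenewalAux
variable {a b : ℝ}

noncomputable def gg (a b t : ℝ) : ℝ :=
  if 0 < t then Real.exp (-a * Real.log t - b / t) else 0

lemma gg_meas (a b : ℝ) : Measurable (gg a b) := by
  unfold gg
  exact Measurable.ite (measurableSet_lt measurable_const measurable_id)
    (Real.measurable_exp.comp
      ((Real.measurable_log.const_mul (-a)).sub (measurable_const.div measurable_id)))
    measurable_const

lemma gg_of_pos {a b t : ℝ} (ht : 0 < t) :
    gg a b t = Real.exp (-a * Real.log t - b / t) := if_pos ht

lemma gg_pos {a b t : ℝ} (ht : 0 < t) : 0 < gg a b t := by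
  rw [gg_of_pos ht]; exact Real.exp_pos _

lemma gg_nonneg (a b t : ℝ) : 0 ≤ gg a b t := by
  unfold gg; split
  · exact (Real.exp_pos _).le
  · exact le_refl 0

lemma gg_rpow {a b t : ℝ} (ht : 0 < t) :
    gg a b t = t ^ (-a) * Real.exp (-b / t) := by
  rw [gg_of_pos ht, Real.rpow_def_of_pos ht, ← Real.exp_add]
  congr 1; ring


noncomputable def pf (a b t : ℝ) : ℝ := -a * Real.log t - b / t

lemma p_deriv (a b : ℝ) {t : ℝ} (ht : 0 < t) :
    HasDerivAt (pf a b) (-a * t⁻¹ - b * (-(t ^ 2)⁻¹)) t := by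
  have h1 := (Real.hasDerivAt_log ht.ne').const_mul (-a)
  have h2 := (hasDerivAt_inv ht.ne').const_mul b
  unfold pf
  simpa [div_eq_mul_inv, mul_comm] using h1.fun_sub h2

lemma pf_cont {a b : ℝ} {s : Set ℝ} (hs : ∀ x ∈ s, 0 < x) :
    ContinuousOn (pf a b) s := by
  apply ContinuousOn.sub
  · exact continuousOn_const.mul (Real.continuousOn_log.mono
      (fun x hx => by simpa using (hs x hx).ne'))
  · exact continuousOn_const.div continuousOn_id (fun x hx => (hs x hx).ne')

lemma pf_anti {a b : ℝ} (ha : 0 < a) (hb : 0 < b) :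
    AntitoneOn (pf a b) (Ici (b / a)) := by
  have ht0 : 0 < b / a := div_pos hb ha
  apply antitoneOn_of_deriv_nonpos (convex_Ici _)
      (pf_cont (fun x hx => lt_of_lt_of_le ht0 hx))
  · intro x hx
    rw [interior_Ici] at hx
    exact ((p_deriv a b (ht0.trans hx)).differentiableAt).differentiableWithinAt
  · intro x hx
    rw [interior_Ici] at hx
    have hx0 : 0 < x := ht0.trans hx
    rw [(p_deriv a b hx0).deriv]
    have h : -a * x⁻¹ - b * (-(x ^ 2)⁻¹) = (b - a * x) / x ^ 2 := by
      field_simp; ring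
    rw [h]
    apply div_nonpos_of_nonpos_of_nonneg _ (sq_nonneg x)
    have hbx : b < x * a := (div_lt_iff₀ ha).1 hx
    nlinarith

lemma pf_mono {a b : ℝ} (ha : 0 < a) (hb : 0 < b) :
    MonotoneOn (pf a b) (Ioc 0 (b / a)) := by
  apply monotoneOn_of_deriv_nonneg (convex_Ioc _ _) (pf_cont (fun x hx => hx.1))
  · intro x hx
    rw [interior_Ioc] at hx
    exact ((p_deriv a b hx.1).differentiableAt).differentiableWithinAt
  · intro x hx
    rw [interior_Ioc] at hx
    rw [(p_deriv a b hx.1).deriv]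
    have h : -a * x⁻¹ - b * (-(x ^ 2)⁻¹) = (b - a * x) / x ^ 2 := by
      field_simp [hx.1.ne']; ring
    rw [h]
    apply div_nonneg _ (sq_nonneg x)
    have hbx : x * a < b := (lt_div_iff₀ ha).1 hx.2
    nlinarith

lemma gg_anti (ha : 0 < a) (hb : 0 < b) : AntitoneOn (gg a b) (Ici (b / a)) := by
  have ht0 : 0 < b / a := div_pos hb ha
  intro x hx y hy hxy
  rw [gg_of_pos (ht0.trans_le hx), gg_of_pos (ht0.trans_le hy)]
  exact Real.exp_le_exp.2 (pf_anti ha hb hx hy hxy)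

lemma gg_le_max (ha : 0 < a) (hb : 0 < b) {t : ℝ} (ht : 0 < t) :
    gg a b t ≤ gg a b (b / a) := by
  have ht0 : 0 < b / a := div_pos hb ha
  rcases le_or_gt t (b / a) with h | h
  · rw [gg_of_pos ht, gg_of_pos ht0]
    exact Real.exp_le_exp.2 (pf_mono ha hb ⟨ht, h⟩ ⟨ht0, le_refl _⟩ h)
  · exact gg_anti ha hb (self_mem_Ici) (le_of_lt h) h.le

lemma gg_int_Ioi (ha : 1 < a) (hb : 0 < b) {s : ℝ} (hs : 0 < s) :
    IntegrableOn (gg a b) (Ioi s) := by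
  have hint : IntegrableOn (fun t : ℝ => t ^ (-a)) (Ioi s) :=
    integrableOn_Ioi_rpow_of_lt (by linarith) hs
  apply Integrable.mono' hint ((gg_meas a b).aestronglyMeasurable.restrict
    (μ := volume) (s := Ioi s))
  filter_upwards [ae_restrict_mem measurableSet_Ioi] with t ht
  have ht0 : 0 < t := hs.trans ht
  rw [Real.norm_eq_abs, abs_of_nonneg (gg_nonneg a b t), gg_rpow ht0]
  have h1 : Real.exp (-b / t) ≤ 1 := by
    rw [Real.exp_le_one_iff]
    exact div_nonpos_of_nonpos_of_nonneg (by linarith) ht0.le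
  calc t ^ (-a) * Real.exp (-b / t) ≤ t ^ (-a) * 1 :=
        mul_le_mul_of_nonneg_left h1 (Real.rpow_nonneg ht0.le _)
    _ = t ^ (-a) := mul_one _

lemma gg_int_Ioc (ha : 0 < a) (hb : 0 < b) {s : ℝ} :
    IntegrableOn (gg a b) (Ioc 0 s) := by
  apply Measure.integrableOn_of_bounded (M := gg a b (b / a))
  · exact ((measure_Ioc_lt_top).ne)
  · exact (gg_meas a b).aestronglyMeasurable
  · filter_upwards [ae_restrict_mem measurableSet_Ioc] with t ht
    rw [Real.norm_eq_abs, abs_of_nonneg (gg_nonneg a b t)]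
    exact gg_le_max ha hb ht.1

lemma gg_int (ha : 1 < a) (hb : 0 < b) : IntegrableOn (gg a b) (Ioi 0) := by
  have ht0 : 0 < b / a := div_pos hb (by linarith)
  have : Ioi (0:ℝ) = Ioc 0 (b/a) ∪ Ioi (b/a) := (Ioc_union_Ioi_eq_Ioi ht0.le).symm
  rw [this]
  exact (gg_int_Ioc (by linarith) hb).union (gg_int_Ioi ha hb ht0)

lemma I_pos (ha : 1 < a) (hb : 0 < b) : 0 < ∫ t in Ioi (0:ℝ), gg a b t := by
  rw [setIntegral_pos_iff_support_of_nonneg_ae]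
  · have hsub : Ioi (0:ℝ) ⊆ Function.support (gg a b) ∩ Ioi 0 :=
      fun t ht => ⟨(gg_pos ht).ne', ht⟩
    calc (0:ℝ≥0∞) < volume (Ioi (0:ℝ)) := by simp [Real.volume_Ioi]
      _ ≤ _ := measure_mono hsub
  · exact ae_of_all _ (fun t => gg_nonneg a b t)
  · exact gg_int ha hb


noncomputable def GG (a b t : ℝ) : ℝ :=
  if t ≤ b / a then gg a b (b / a) else gg a b t

lemma GG_int (ha : 1 < a) (hb : 0 < b) : IntegrableOn (GG a b) (Ici 0) := by
  have ht0 : 0 < b / a := div_pos hb (by linarith)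
  have : Ici (0:ℝ) = Icc 0 (b/a) ∪ Ioi (b/a) := (Icc_union_Ioi_eq_Ici ht0.le).symm
  rw [this]
  apply IntegrableOn.union
  · apply IntegrableOn.congr_fun (f := fun _ => gg a b (b/a))
      (integrableOn_const measure_Icc_lt_top.ne enorm_ne_top)
    · intro t ht; simp [GG, ht.2]
    · exact measurableSet_Icc
  · apply IntegrableOn.congr_fun (f := gg a b) (gg_int_Ioi ha hb ht0)
    · intro t ht; simp [GG, not_le.2 (mem_Ioi.1 ht)]
    · exact measurableSet_Ioi

lemma GG_bound (ha : 0 < a) (hb : 0 < b) {t s : ℝ} (ht : 0 < t) (hts : t < s) :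
    gg a b s ≤ GG a b t := by
  unfold GG; split
  · exact gg_le_max ha hb (ht.trans hts)
  · next h =>
      push_neg at h
      exact gg_anti ha hb h.le (h.le.trans hts.le) hts.le

-- a.e. positivity on restriction to Ici 0
lemma ae_pos : ∀ᵐ t ∂(volume.restrict (Ici (0:ℝ))), 0 < t := by
  rw [Measure.restrict_congr_set Ioi_ae_eq_Ici.symm]
  filter_upwards [ae_restrict_mem measurableSet_Ioi] with t ht using ht

lemma phi_meas (a b u : ℝ) :
    Measurable (fun t : ℝ => gg a b (((⌊u * t⌋₊ : ℝ) + 1) / u)) := by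
  apply (gg_meas a b).comp
  apply Measurable.div_const
  apply Measurable.add_const _ 1
  exact Measurable.comp (measurable_from_top) (Nat.measurable_floor.comp
    (measurable_id.const_mul u))

lemma floor_lt {u t : ℝ} (hu : 0 < u) (ht : 0 < t) :
    t < ((⌊u * t⌋₊ : ℝ) + 1) / u := by
  rw [lt_div_iff₀ hu]
  calc t * u = u * t := mul_comm t u
    _ < (⌊u * t⌋₊ : ℝ) + 1 := Nat.lt_floor_add_one _

lemma phi_bound (ha : 0 < a) (hb : 0 < b) {u : ℝ} (hu : 0 < u) :
    ∀ᵐ t ∂(volume.restrict (Ici (0:ℝ))),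
      ‖gg a b (((⌊u * t⌋₊ : ℝ) + 1) / u)‖ ≤ GG a b t := by
  filter_upwards [ae_pos] with t ht
  rw [Real.norm_eq_abs, abs_of_nonneg (gg_nonneg a b _)]
  exact GG_bound ha hb ht (floor_lt hu ht)

lemma phi_tendsto (a b : ℝ) {t : ℝ} (ht : 0 < t) :
    Tendsto (fun u : ℝ => gg a b (((⌊u * t⌋₊ : ℝ) + 1) / u)) atTop
      (nhds (gg a b t)) := by
  have h1 : Tendsto (fun u : ℝ => ((⌊u * t⌋₊ : ℝ) + 1) / u) atTop (nhds t) := by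
    apply tendsto_of_tendsto_of_tendsto_of_le_of_le' (g := fun _ => t)
        (h := fun u : ℝ => t + 1 / u) tendsto_const_nhds
    · have h0 : Tendsto (fun u : ℝ => 1 / u) atTop (nhds 0) := by
        simpa [one_div] using (tendsto_inv_atTop_zero (𝕜 := ℝ))
      simpa using tendsto_const_nhds.add h0
    · filter_upwards [eventually_gt_atTop 0] with u hu
      exact (floor_lt hu ht).le
    · filter_upwards [eventually_gt_atTop 0] with u hu
      rw [div_le_iff₀ hu]
      have h2 : (⌊u * t⌋₊ : ℝ) ≤ u * t := Nat.floor_le (by positivity)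
      have : (t + 1 / u) * u = u * t + 1 := by field_simp
      rw [this]; linarith
  have h2 : ContinuousAt (gg a b) t := by
    have hev : gg a b =ᶠ[nhds t] (fun s => Real.exp (-a * Real.log s - b / s)) := by
      filter_upwards [isOpen_Ioi.eventually_mem (mem_Ioi.2 ht)] with s hs
      exact gg_of_pos hs
    have hexp : ContinuousAt (fun s : ℝ => Real.exp (-a * Real.log s - b / s)) t := by
      apply Real.continuous_exp.continuousAt.comp
      exact (continuousAt_const.mul (Real.continuousAt_log ht.ne')).sub
        (continuousAt_const.div continuousAt_id ht.ne')
    exact hexp.congr hev.symm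
  exact h2.tendsto.comp h1


lemma key (ha : 1 < a) (hb : 0 < b) :
    Tendsto (fun u : ℝ => ∫ t in Ici (0:ℝ), gg a b (((⌊u * t⌋₊ : ℝ) + 1) / u))
      atTop (nhds (∫ t in Ioi (0:ℝ), gg a b t)) := by
  rw [← integral_Ici_eq_integral_Ioi]
  apply tendsto_integral_filter_of_dominated_convergence (GG a b)
  · filter_upwards with u
    exact (phi_meas a b u).aestronglyMeasurable
  · filter_upwards [eventually_gt_atTop 0] with u hu
    exact phi_bound (by linarith) hb hu
  · exact GG_int ha hb
  · filter_upwards [ae_pos] with t ht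
    exact phi_tendsto a b ht

lemma union_Ico {u : ℝ} (hu : 0 < u) :
    (⋃ n : ℕ, Ico ((n : ℝ) / u) (((n : ℝ) + 1) / u)) = Ici 0 := by
  ext t
  simp only [mem_iUnion, mem_Ico, mem_Ici]
  constructor
  · rintro ⟨n, h1, _⟩
    exact le_trans (by positivity) h1
  · intro ht
    refine ⟨⌊u * t⌋₊, ?_, ?_⟩
    · rw [div_le_iff₀ hu]
      calc ((⌊u * t⌋₊ : ℝ)) ≤ u * t := Nat.floor_le (by positivity)
        _ = t * u := mul_comm _ _
    · rw [lt_div_iff₀ hu]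
      calc t * u = u * t := mul_comm _ _
        _ < (⌊u * t⌋₊ : ℝ) + 1 := Nat.lt_floor_add_one _

lemma sum_eq (ha : 1 < a) (hb : 0 < b) {u : ℝ} (hu : 0 < u) :
    ∫ t in Ici (0:ℝ), gg a b (((⌊u * t⌋₊ : ℝ) + 1) / u)
      = ∑' n : ℕ, (1 / u) * gg a b (((n : ℝ) + 1) / u) := by
  have hmeas : ∀ n : ℕ, MeasurableSet (Ico ((n : ℝ) / u) (((n : ℝ) + 1) / u)) :=
    fun n => measurableSet_Ico
  have hdisj : Pairwise (Function.onFun Disjoint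
      (fun n : ℕ => Ico ((n : ℝ) / u) (((n : ℝ) + 1) / u))) := by
    intro m n hmn
    rcases hmn.lt_or_gt with h | h
    · apply Ico_disjoint_Ico.2
      have hle : ((m : ℝ) + 1) / u ≤ (n : ℝ) / u := by
        gcongr
        exact_mod_cast Nat.succ_le_of_lt h
      exact le_trans (min_le_left _ _) (le_trans hle (le_max_right _ _))
    · apply Ico_disjoint_Ico.2
      have hle : ((n : ℝ) + 1) / u ≤ (m : ℝ) / u := by
        gcongr
        exact_mod_cast Nat.succ_le_of_lt h
      exact le_trans (min_le_right _ _) (le_trans hle (le_max_left _ _))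
  have hint : IntegrableOn (fun t : ℝ => gg a b (((⌊u * t⌋₊ : ℝ) + 1) / u))
      (⋃ n : ℕ, Ico ((n : ℝ) / u) (((n : ℝ) + 1) / u)) := by
    rw [union_Ico hu]
    exact Integrable.mono' (GG_int ha hb)
      ((phi_meas a b u).aestronglyMeasurable) (phi_bound (by linarith) hb hu)
  calc ∫ t in Ici (0:ℝ), gg a b (((⌊u * t⌋₊ : ℝ) + 1) / u)
      = ∫ t in (⋃ n : ℕ, Ico ((n : ℝ) / u) (((n : ℝ) + 1) / u)),
          gg a b (((⌊u * t⌋₊ : ℝ) + 1) / u) := by rw [union_Ico hu]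
    _ = ∑' n : ℕ, ∫ t in Ico ((n : ℝ) / u) (((n : ℝ) + 1) / u),
          gg a b (((⌊u * t⌋₊ : ℝ) + 1) / u) := integral_iUnion hmeas hdisj hint
    _ = ∑' n : ℕ, (1 / u) * gg a b (((n : ℝ) + 1) / u) := by
        apply tsum_congr
        intro n
        have hfloor : ∀ t ∈ Ico ((n : ℝ) / u) (((n : ℝ) + 1) / u),
            gg a b (((⌊u * t⌋₊ : ℝ) + 1) / u) = gg a b (((n : ℝ) + 1) / u) := by
          intro t ht
          have ht0 : 0 ≤ t := le_trans (by positivity) ht.1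
          have h1 : (n : ℝ) ≤ u * t := by
            have h := ht.1
            rw [div_le_iff₀ hu] at h
            calc (n:ℝ) ≤ t * u := h
              _ = u * t := mul_comm _ _
          have h2 : u * t < (n : ℝ) + 1 := by
            have := ht.2
            rw [lt_div_iff₀ hu] at this
            calc u * t = t * u := mul_comm _ _
              _ < (n : ℝ) + 1 := this
          have hfl : ⌊u * t⌋₊ = n := by
            rw [Nat.floor_eq_iff (mul_nonneg hu.le ht0)]
            exact ⟨by exact_mod_cast h1, by exact_mod_cast h2⟩
          rw [hfl]
        rw [setIntegral_congr_fun measurableSet_Ico hfloor, setIntegral_const,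
          measureReal_def, Real.volume_Ico, smul_eq_mul]
        congr 1
        have hd : ((n : ℝ) + 1) / u - (n : ℝ) / u = 1 / u := by ring
        rw [hd, ENNReal.toReal_ofReal (by positivity)]


lemma term_eq (ha : 1 < a) (hb : 0 < b) {u : ℝ} (hu : 0 < u) (n : ℕ) :
    (1 / u) * gg a b (((n : ℝ) + 1) / u)
      = u ^ (a - 1) * (((n : ℝ) + 1) ^ (-a) * Real.exp (-b * u / ((n : ℝ) + 1))) := by
  have hn : (0:ℝ) < (n : ℝ) + 1 := by positivity
  have hq : (0:ℝ) < ((n : ℝ) + 1) / u := by positivity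
  rw [gg_rpow hq]
  have e1 : (((n : ℝ) + 1) / u) ^ (-a) = ((n : ℝ) + 1) ^ (-a) * u ^ a := by
    rw [Real.div_rpow hn.le hu.le, Real.rpow_neg hu.le]
    field_simp
  have e2 : -b / (((n : ℝ) + 1) / u) = -b * u / ((n : ℝ) + 1) := div_div_eq_mul_div _ _ _
  rw [e1, e2]
  have e3 : u ^ (a - 1) = u ^ a / u := by
    rw [Real.rpow_sub hu, Real.rpow_one]
  rw [e3]
  ring

end RenewalAux

/-- For any real numbers `a > 1` and `b, c > 0` there exists `K > 0` such
that `Σ_{n≥1} c n^{−a} e^{−b u / n} ∼ K u^{−(a−1)}` as `u → ∞`. -/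
theorem renewal_series_asymptotics (a b c : ℝ) (ha : 1 < a) (hb : 0 < b) (hc : 0 < c) :
    ∃ K : ℝ, 0 < K ∧
      Tendsto
        (fun u : ℝ =>
          (∑' n : ℕ, c * ((n : ℝ) + 1) ^ (-a) * Real.exp (-b * u / ((n : ℝ) + 1))) /
            (K * u ^ (-(a - 1))))
        atTop (nhds 1) := by
  set I := ∫ t in Ioi (0:ℝ), gg a b t with hI
  have hIpos : 0 < I := I_pos ha hb
  refine ⟨c * I, mul_pos hc hIpos, ?_⟩
  have hmain : Tendsto
      (fun u : ℝ => (∫ t in Ici (0:ℝ), gg a b (((⌊u * t⌋₊ : ℝ) + 1) / u)) / I)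
      atTop (nhds 1) := by
    have := (key ha hb).div_const I
    rwa [div_self hIpos.ne'] at this
  apply hmain.congr'
  filter_upwards [eventually_gt_atTop 0] with u hu
  rw [sum_eq ha hb hu]
  have hT : (∑' n : ℕ, (1 / u) * gg a b (((n : ℝ) + 1) / u))
      = u ^ (a - 1) * ∑' n : ℕ, (((n : ℝ) + 1) ^ (-a) * Real.exp (-b * u / ((n : ℝ) + 1))) := by
    rw [← tsum_mul_left]
    exact tsum_congr (fun n => term_eq ha hb hu n)
  have hS : (∑' n : ℕ, c * ((n : ℝ) + 1) ^ (-a) * Real.exp (-b * u / ((n : ℝ) + 1)))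
      = c * ∑' n : ℕ, (((n : ℝ) + 1) ^ (-a) * Real.exp (-b * u / ((n : ℝ) + 1))) := by
    rw [← tsum_mul_left]
    exact tsum_congr (fun n => by ring)
  rw [hT, hS]
  have hru : u ^ (-(a - 1)) = (u ^ (a - 1))⁻¹ := Real.rpow_neg hu.le _
  rw [hru]
  have hup : (0:ℝ) < u ^ (a - 1) := Real.rpow_pos_of_pos hu _
  field_simp
end

section
/- Let Γ be a finitely generated group with a fixed finite generating set, let μ be a probability measure on Γ with n-step transition probabilities p_n, and suppose there are a real number D > 2 and a constant c ≥ 1 such that the two-sided Gaussian estimates (1/c) n^{−D/2} e^{−c|x|²/(2n)} ≤ p_n(e,x) ≤ c n^{−D/2} e^{−|x|²/(2cn)} hold for all n ≥ 1 and all x ∈ Γ. Then there exists C ≥ 1 such that for all x ≠ e, (1/C) |x|^{2−D} ≤ G(e,x) ≤ C |x|^{2−D}. -/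
open scoped Pointwise Classical
open Filter

namespace GreenGrowth

/-- step inequality -/
lemma step_ineq {s : ℝ} (hs : 1 < s) {a : ℝ} (ha : 1 ≤ a) :
    (s - 1) * (a + 1) ^ (-s) ≤ a ^ (1 - s) - (a + 1) ^ (1 - s) := by
  have ha0 : (0:ℝ) < a := lt_of_lt_of_le one_pos ha
  have hnot : (0:ℝ) ∉ Set.uIcc a (a+1) := Set.notMem_uIcc_of_lt ha0 (by linarith)
  have hint : ∫ t in a..(a+1), t ^ (-s) = ((a+1) ^ (-s+1) - a ^ (-s+1)) / (-s+1) :=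
    integral_rpow (Or.inr ⟨by linarith, hnot⟩)
  have hmono : (a+1) ^ (-s) ≤ ∫ t in a..(a+1), t ^ (-s) := by
    have h1 : IntervalIntegrable (fun t : ℝ => t ^ (-s)) MeasureTheory.volume a (a+1) :=
      intervalIntegral.intervalIntegrable_rpow (Or.inr hnot)
    have h2 : IntervalIntegrable (fun _ : ℝ => (a+1) ^ (-s)) MeasureTheory.volume a (a+1) :=
      intervalIntegrable_const
    have := intervalIntegral.integral_mono_on (by linarith : a ≤ a + 1) h2 h1
      (fun t ht => Real.rpow_le_rpow_of_nonpos (by linarith [ht.1]) ht.2 (by linarith))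
    simpa using this
  rw [hint] at hmono
  have hne : -s + 1 < 0 := by linarith
  have hmul := mul_le_mul_of_nonneg_left hmono (by linarith : (0:ℝ) ≤ s - 1)
  have heq : (s-1) * (((a+1) ^ (-s+1) - a ^ (-s+1))/(-s+1)) = a ^ (-s+1) - (a+1) ^ (-s+1) := by
    have h0 : (-s+1) ≠ 0 := ne_of_lt hne
    have h0' : (1-s) ≠ 0 := by intro h; apply h0; linarith
    field_simp
    ring
  have h1s : (1:ℝ) - s = -s + 1 := by ring
  rw [h1s]
  linarith [hmul, heq]


/-- tail of p-series -/
lemma tail_sum {s : ℝ} (hs : 1 < s) {M : ℕ} (hM : 1 ≤ M) :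
    ∑' n : ℕ, ((M : ℝ) + n + 1) ^ (-s) ≤ (M : ℝ) ^ (1 - s) / (s - 1) := by
  have hs1 : (0:ℝ) < s - 1 := by linarith
  have hM0 : (0:ℝ) < M := by exact_mod_cast hM
  set f : ℕ → ℝ := fun n => ((M : ℝ) + n) ^ (1 - s) with hf
  apply Real.tsum_le_of_sum_range_le
    (fun n => Real.rpow_nonneg (by positivity) _)
  intro N
  have key : ∀ n : ℕ, ((M:ℝ) + n + 1) ^ (-s) ≤ (f n - f (n+1)) / (s-1) := by
    intro n
    rw [le_div_iff₀ hs1]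
    have hstep := step_ineq hs (a := (M:ℝ) + n)
      (by push_cast; linarith [Nat.cast_nonneg (α := ℝ) n, (by exact_mod_cast hM : (1:ℝ) ≤ (M:ℝ))])
    have hfn1 : f (n+1) = ((M:ℝ) + n + 1) ^ (1 - s) := by
      simp only [hf]; push_cast; ring_nf
    rw [mul_comm]
    simp only [hf]
    push_cast
    ring_nf
    ring_nf at hstep
    linarith [hstep]
  calc ∑ n ∈ Finset.range N, ((M:ℝ) + n + 1) ^ (-s)
      ≤ ∑ n ∈ Finset.range N, (f n - f (n+1)) / (s-1) :=
        Finset.sum_le_sum (fun n _ => key n)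
    _ = (f 0 - f N) / (s-1) := by rw [← Finset.sum_div, Finset.sum_range_sub']
    _ ≤ f 0 / (s-1) := by
        gcongr
        have : (0:ℝ) ≤ f N := Real.rpow_nonneg (by positivity) _
        linarith
    _ = (M : ℝ) ^ (1 - s) / (s - 1) := by simp [hf]

/-- exp bound -/
lemma exp_neg_le {k : ℕ} (hk : 1 ≤ k) {x : ℝ} (hx : 0 < x) :
    Real.exp (-x) ≤ ((k : ℝ) / x) ^ k := by
  have hk0 : (0:ℝ) < k := by exact_mod_cast hk
  have h1 : x / k ≤ Real.exp (x / k) :=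
    le_trans (by linarith [div_nonneg hx.le hk0.le]) (Real.add_one_le_exp (x / k))
  have h2 : (x / k) ^ k ≤ Real.exp x := by
    have : Real.exp x = (Real.exp (x / k)) ^ k := by
      rw [← Real.exp_nat_mul]
      congr 1
      field_simp
    rw [this]
    exact pow_le_pow_left₀ (div_nonneg hx.le hk0.le) h1 k
  have hpos : (0:ℝ) < (x / k) ^ k := by positivity
  rw [Real.exp_neg]
  calc (Real.exp x)⁻¹ ≤ ((x / k) ^ k)⁻¹ := by
        apply inv_anti₀ hpos h2
    _ = ((k : ℝ) / x) ^ k := by rw [← inv_pow, inv_div]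

/-- positivity of wordLength -/
lemma wordLength_pos {G : Type*} [Group G] {S : Finset G}
    (hS : Subgroup.closure (S : Set G) = ⊤) {x : G} (hx : x ≠ 1) :
    1 ≤ wordLength S x := by
  set A : Set G := (S : Set G) ∪ (S : Set G)⁻¹ with hA
  have hAinv : A⁻¹ = A := by
    rw [hA, Set.union_inv, inv_inv, Set.union_comm]
  have hmem : ∀ y : G, ∃ n, y ∈ A ^ n := by
    intro y
    have hy : y ∈ Subgroup.closure (S : Set G) := hS ▸ Subgroup.mem_top y
    clear hx
    induction hy using Subgroup.closure_induction with
    | mem y hy => exact ⟨1, by rw [pow_one]; exact Or.inl hy⟩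
    | one => exact ⟨0, by rw [pow_zero]; exact Set.mem_one.2 rfl⟩
    | mul y z _ _ hy hz =>
        obtain ⟨n, hn⟩ := hy; obtain ⟨m, hm⟩ := hz
        exact ⟨n + m, by rw [pow_add]; exact Set.mul_mem_mul hn hm⟩
    | inv y _ hy =>
        obtain ⟨n, hn⟩ := hy
        refine ⟨n, ?_⟩
        rw [← hAinv, inv_pow]
        simpa using hn
  have hne : {n : ℕ | x ∈ A ^ n}.Nonempty := hmem x
  have hsp := Nat.sInf_mem hne
  have hw : wordLength S x = sInf {n : ℕ | x ∈ A ^ n} := rfl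
  rw [Nat.one_le_iff_ne_zero, hw]
  intro h0
  rw [h0] at hsp
  have : x ∈ A ^ (0:ℕ) := hsp
  rw [pow_zero] at this
  exact hx (Set.mem_one.1 this)


/-- If the transition probabilities of a random walk on a finitely
generated group satisfy two-sided Gaussian estimates with exponent `D > 2`, then
`G(e,x) ≍ |x|^{2−D}` for `x ≠ e`. -/
theorem green_asymptotics_of_gaussian_estimates {G : Type*} [Group G] (S : Finset G)
    (hS : Subgroup.closure (S : Set G) = ⊤) (μ : G → ℝ) (hprob : IsProbMeasure μ)
    (D : ℝ) (hD : 2 < D) (c : ℝ) (hc : 1 ≤ c)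
    (hgauss : ∀ n : ℕ, 1 ≤ n → ∀ x : G,
      (1 / c) * (n : ℝ) ^ (-(D / 2)) *
          Real.exp (-c * (wordLength S x : ℝ) ^ 2 / (2 * n)) ≤ convPow μ n x ∧
        convPow μ n x ≤
          c * (n : ℝ) ^ (-(D / 2)) *
            Real.exp (-(wordLength S x : ℝ) ^ 2 / (2 * c * n))) :
    ∃ C : ℝ, 1 ≤ C ∧ ∀ x : G, x ≠ 1 →
      (1 / C) * (wordLength S x : ℝ) ^ ((2 : ℝ) - D) ≤ green μ 1 x ∧
        green μ 1 x ≤ C * (wordLength S x : ℝ) ^ ((2 : ℝ) - D) := by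
  classical
  have hc0 : (0:ℝ) < c := lt_of_lt_of_le one_pos hc
  set s : ℝ := D / 2 with hsdef
  have hs : 1 < s := by rw [hsdef]; linarith
  have hs1 : (0:ℝ) < s - 1 := by linarith
  set k : ℕ := ⌈s⌉₊ with hkdef
  have hk1 : 1 ≤ k := Nat.one_le_cast.1 ((Nat.le_ceil s).trans' (by exact_mod_cast hs.le)) |>.trans (le_refl k)
  have hks : s ≤ (k:ℝ) := Nat.le_ceil s
  have hkR : (1:ℝ) ≤ (k:ℝ) := by exact_mod_cast hk1
  -- nonnegativity of convPow
  have hnonneg : ∀ (y : G) (n : ℕ), 0 ≤ convPow μ n y := by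
    intro y n
    match n with
    | 0 =>
      simp only [convPow]
      split <;> norm_num
    | Nat.succ n =>
      refine le_trans ?_ (hgauss (n+1) (Nat.le_add_left 1 n) y).1
      positivity
  -- constants
  set Cup : ℝ := 2*c*(2*c*(k:ℝ))^k + c/(s-1) with hCup
  set Clow : ℝ := c * 2^s * Real.exp (c/2) with hClow
  have hCup0 : 0 ≤ Cup := by
    rw [hCup]
    have h1 : (0:ℝ) ≤ 2*c*(2*c*(k:ℝ))^k := by positivity
    have h2 : (0:ℝ) ≤ c/(s-1) := div_nonneg hc0.le hs1.le
    linarith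
  have hClow0 : (0:ℝ) < Clow := by rw [hClow]; positivity
  refine ⟨1 + Cup + Clow, by linarith, ?_⟩
  intro x hx
  set m : ℕ := wordLength S x with hmdef
  have hm1 : 1 ≤ m := wordLength_pos hS hx
  have hm0 : (0:ℝ) < (m:ℝ) := by exact_mod_cast hm1
  have hmR1 : (1:ℝ) ≤ (m:ℝ) := by exact_mod_cast hm1
  set M : ℕ := m * m with hMdef
  have hM1 : 1 ≤ M := by rw [hMdef]; exact Nat.one_le_iff_ne_zero.2 (by positivity)
  have hMcast : (M:ℝ) = (m:ℝ)^2 := by rw [hMdef]; push_cast; ring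
  have hMR1 : (1:ℝ) ≤ (M:ℝ) := by exact_mod_cast hM1
  have hMpos : (0:ℝ) < (M:ℝ) := by linarith
  clear_value s k Cup Clow m M
  -- basic rewriting of green
  have hgreen : green μ 1 x = ∑' n : ℕ, convPow μ n x := by
    simp [green]
  -- summable upper comparison
  have hbound : ∀ n : ℕ, convPow μ n x ≤ c * (n:ℝ) ^ (-s) := by
    intro n
    match n with
    | 0 =>
      simp only [convPow, if_neg hx, Nat.cast_zero]
      rw [Real.zero_rpow (by intro h; rw [neg_eq_zero] at h; linarith)]
      simp
    | Nat.succ n =>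
      have h := (hgauss (n+1) (Nat.le_add_left 1 n) x).2
      rw [← hmdef] at h
      refine h.trans ?_
      have hexp : Real.exp (-(m:ℝ)^2 / (2*c*((n:ℝ)+1))) ≤ 1 := by
        rw [Real.exp_le_one_iff]
        have : (0:ℝ) ≤ (m:ℝ)^2 / (2*c*((n:ℝ)+1)) := by positivity
        rw [neg_div]
        linarith
      have hrp : (0:ℝ) ≤ c * ((n:ℝ)+1) ^ (-s) := by positivity
      calc c * (((n+1:ℕ)):ℝ) ^ (-s) * Real.exp (-(m:ℝ)^2 / (2*c*((n+1:ℕ):ℝ)))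
          ≤ c * (((n+1:ℕ)):ℝ) ^ (-s) * 1 := by
            apply mul_le_mul_of_nonneg_left ?_ (by positivity)
            push_cast
            exact hexp
        _ = c * (((n+1:ℕ)):ℝ) ^ (-s) := by ring
  have hsummable : Summable (fun n : ℕ => convPow μ n x) := by
    apply Summable.of_nonneg_of_le (fun n => hnonneg x n) hbound
    apply Summable.mul_left
    exact Real.summable_nat_rpow.2 (by linarith)
  -- ====================== UPPER BOUND ======================
  set B : ℝ := c * (2*c*(k:ℝ))^k * (M:ℝ)^((k:ℝ)-s) / ((m:ℝ)^2)^k with hB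
  have hB0 : 0 ≤ B := by rw [hB]; positivity
  clear_value B
  have hterm1 : ∀ n ∈ Finset.range (M+1), convPow μ n x ≤ B := by
    intro n hn
    rcases Nat.eq_zero_or_pos n with h0 | h0
    · subst h0
      simp only [convPow, if_neg hx]
      exact hB0
    · have hn1 : 1 ≤ n := h0
      have hnM : n ≤ M := by rw [Finset.mem_range] at hn; omega
      have hnR : (0:ℝ) < (n:ℝ) := by exact_mod_cast hn1
      have h := (hgauss n hn1 x).2
      rw [← hmdef] at h
      have hxpos : (0:ℝ) < (m:ℝ)^2 / (2*c*(n:ℝ)) := by positivity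
      have hexp : Real.exp (-(m:ℝ)^2 / (2*c*(n:ℝ))) ≤ ((k:ℝ) / ((m:ℝ)^2 / (2*c*(n:ℝ))))^k := by
        rw [neg_div]
        exact exp_neg_le hk1 hxpos
      have h2 : convPow μ n x ≤ c * (n:ℝ)^(-s) * ((k:ℝ) / ((m:ℝ)^2/(2*c*(n:ℝ))))^k :=
        h.trans (mul_le_mul_of_nonneg_left hexp (by positivity))
      refine h2.trans ?_
      have hq : (k:ℝ) / ((m:ℝ)^2/(2*c*(n:ℝ))) = (2*c*(k:ℝ)) * (n:ℝ) / (m:ℝ)^2 := by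
        field_simp
      rw [hq, div_pow, mul_pow]
      have hcomb : (n:ℝ)^(-s) * (n:ℝ)^k = (n:ℝ)^((k:ℝ)-s) := by
        rw [← Real.rpow_natCast (n:ℝ) k, ← Real.rpow_add hnR]
        ring_nf
      have hle : (n:ℝ)^((k:ℝ)-s) ≤ (M:ℝ)^((k:ℝ)-s) :=
        Real.rpow_le_rpow hnR.le (by exact_mod_cast hnM) (by linarith)
      calc c * (n:ℝ)^(-s) * ((2*c*(k:ℝ))^k * (n:ℝ)^k / ((m:ℝ)^2)^k)
          = c * (2*c*(k:ℝ))^k * ((n:ℝ)^(-s) * (n:ℝ)^k) / ((m:ℝ)^2)^k := by ring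
        _ = c * (2*c*(k:ℝ))^k * (n:ℝ)^((k:ℝ)-s) / ((m:ℝ)^2)^k := by rw [hcomb]
        _ ≤ B := by
            rw [hB]
            gcongr
  have hsum1 : ∑ n ∈ Finset.range (M+1), convPow μ n x ≤ ((M:ℝ)+1) * B := by
    have := Finset.sum_le_card_nsmul (Finset.range (M+1)) (fun n => convPow μ n x) B hterm1
    rw [Finset.card_range] at this
    calc ∑ n ∈ Finset.range (M+1), convPow μ n x ≤ (M+1) • B := this
      _ = ((M:ℝ)+1) * B := by rw [nsmul_eq_mul]; push_cast; ring
  -- key exponent identity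
  have hE : (M:ℝ) * ((M:ℝ)^((k:ℝ)-s) / ((m:ℝ)^2)^k) = (m:ℝ)^((2:ℝ)-D) := by
    rw [div_eq_mul_inv, ← Real.rpow_natCast ((m:ℝ)^2) k, hMcast,
      ← Real.rpow_natCast (m:ℝ) 2, ← Real.rpow_neg (by positivity),
      ← Real.rpow_mul hm0.le, ← Real.rpow_mul hm0.le,
      ← Real.rpow_add hm0, ← Real.rpow_add hm0]
    congr 1
    push_cast
    rw [hsdef]
    ring
  have hup1 : ((M:ℝ)+1) * B ≤ (2*c*(2*c*(k:ℝ))^k) * (m:ℝ)^((2:ℝ)-D) := by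
    have hstep : ((M:ℝ)+1) * B ≤ (2*(M:ℝ)) * B := by
      apply mul_le_mul_of_nonneg_right ?_ hB0
      linarith
    refine hstep.trans (le_of_eq ?_)
    rw [hB]
    calc (2*(M:ℝ)) * (c * (2*c*(k:ℝ))^k * (M:ℝ)^((k:ℝ)-s) / ((m:ℝ)^2)^k)
        = (2*c*(2*c*(k:ℝ))^k) * ((M:ℝ) * ((M:ℝ)^((k:ℝ)-s) / ((m:ℝ)^2)^k)) := by ring
      _ = (2*c*(2*c*(k:ℝ))^k) * (m:ℝ)^((2:ℝ)-D) := by rw [hE]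
  -- tail bound
  have hE2 : (M:ℝ)^(1-s) = (m:ℝ)^((2:ℝ)-D) := by
    rw [hMcast, ← Real.rpow_natCast (m:ℝ) 2, ← Real.rpow_mul hm0.le]
    congr 1
    push_cast
    rw [hsdef]
    ring
  have htailsum : Summable (fun i : ℕ => ((M:ℝ) + (i:ℝ) + 1)^(-s)) := by
    have h1 : Summable (fun i : ℕ => (((i + (M+1) : ℕ)):ℝ)^(-s)) :=
      (summable_nat_add_iff (f := fun n : ℕ => (n:ℝ)^(-s)) (M+1)).2 (Real.summable_nat_rpow.2 (by linarith))
    refine h1.congr (fun i => ?_)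
    congr 1
    push_cast
    ring
  have htail : ∑' i : ℕ, convPow μ (i + (M+1)) x ≤ (c/(s-1)) * (m:ℝ)^((2:ℝ)-D) := by
    have hle : ∀ i : ℕ, convPow μ (i + (M+1)) x ≤ c * ((M:ℝ) + (i:ℝ) + 1)^(-s) := by
      intro i
      have := hbound (i + (M+1))
      refine this.trans ?_
      apply mul_le_mul_of_nonneg_left ?_ hc0.le
      apply le_of_eq
      congr 1
      push_cast
      ring
    calc ∑' i : ℕ, convPow μ (i + (M+1)) x
        ≤ ∑' i : ℕ, c * ((M:ℝ) + (i:ℝ) + 1)^(-s) :=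
          Summable.tsum_le_tsum hle ((summable_nat_add_iff (f := fun n : ℕ => convPow μ n x) (M+1)).2 hsummable) (htailsum.mul_left c)
      _ = c * ∑' i : ℕ, ((M:ℝ) + (i:ℝ) + 1)^(-s) := tsum_mul_left
      _ ≤ c * ((M:ℝ)^(1-s) / (s-1)) :=
          mul_le_mul_of_nonneg_left (tail_sum hs hM1) hc0.le
      _ = (c/(s-1)) * (m:ℝ)^((2:ℝ)-D) := by rw [hE2]; ring
  have hupper : green μ 1 x ≤ (1 + Cup + Clow) * (m:ℝ)^((2:ℝ)-D) := by
    rw [hgreen, ← Summable.sum_add_tsum_nat_add (M+1) hsummable]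
    have hfin : ∑ n ∈ Finset.range (M+1), convPow μ n x
        + ∑' i : ℕ, convPow μ (i + (M+1)) x
        ≤ (2*c*(2*c*(k:ℝ))^k) * (m:ℝ)^((2:ℝ)-D) + (c/(s-1)) * (m:ℝ)^((2:ℝ)-D) :=
      add_le_add (hsum1.trans hup1) htail
    refine hfin.trans ?_
    have hmp : (0:ℝ) ≤ (m:ℝ)^((2:ℝ)-D) := Real.rpow_nonneg hm0.le _
    have : (2*c*(2*c*(k:ℝ))^k) + c/(s-1) = Cup := by rw [hCup]
    nlinarith [hClow0, hmp]
  -- ====================== LOWER BOUND ======================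
  set b : ℝ := (1/c) * (2*(M:ℝ))^(-s) * Real.exp (-(c/2)) with hb
  have hb0 : (0:ℝ) < b := by rw [hb]; positivity
  clear_value b
  have hlow1 : ∀ n ∈ Finset.Icc M (2*M), b ≤ convPow μ n x := by
    intro n hn
    rw [Finset.mem_Icc] at hn
    have hn1 : 1 ≤ n := le_trans hM1 hn.1
    have hnR : (0:ℝ) < (n:ℝ) := by exact_mod_cast hn1
    have hnM : (M:ℝ) ≤ (n:ℝ) := by exact_mod_cast hn.1
    have hn2M : (n:ℝ) ≤ 2*(M:ℝ) := by exact_mod_cast hn.2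
    have h := (hgauss n hn1 x).1
    rw [← hmdef] at h
    refine le_trans ?_ h
    have h1 : (2*(M:ℝ))^(-s) ≤ (n:ℝ)^(-s) :=
      Real.rpow_le_rpow_of_nonpos hnR hn2M (by linarith)
    have h2 : Real.exp (-(c/2)) ≤ Real.exp (-c * (m:ℝ)^2 / (2*(n:ℝ))) := by
      apply Real.exp_le_exp.2
      rw [neg_mul, neg_div, neg_le_neg_iff]
      rw [div_le_div_iff₀ (by positivity) (by norm_num)]
      have hmn : (m:ℝ)^2 ≤ (n:ℝ) := by rw [← hMcast]; exact hnM
      have := mul_le_mul_of_nonneg_left hmn hc0.le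
      linarith
    rw [hb]
    calc 1/c * (2*(M:ℝ))^(-s) * Real.exp (-(c/2))
        ≤ 1/c * (n:ℝ)^(-s) * Real.exp (-(c/2)) := by
          apply mul_le_mul_of_nonneg_right ?_ (Real.exp_nonneg _)
          apply mul_le_mul_of_nonneg_left h1 (by positivity)
      _ ≤ 1/c * (n:ℝ)^(-s) * Real.exp (-c * (m:ℝ)^2 / (2*(n:ℝ))) := by
          apply mul_le_mul_of_nonneg_left h2 (by positivity)
  have hE3 : (M:ℝ) * (2*(M:ℝ))^(-s) = 2^(-s) * (m:ℝ)^((2:ℝ)-D) := by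
    rw [Real.mul_rpow (by norm_num) hMpos.le]
    have hMM : (M:ℝ) * (M:ℝ)^(-s) = (M:ℝ)^(1-s) := by
      nth_rewrite 1 [← Real.rpow_one (M:ℝ)]
      rw [← Real.rpow_add hMpos]
      ring_nf
    calc (M:ℝ) * ((2:ℝ)^(-s) * (M:ℝ)^(-s)) = (2:ℝ)^(-s) * ((M:ℝ) * (M:ℝ)^(-s)) := by ring
      _ = (2:ℝ)^(-s) * (M:ℝ)^(1-s) := by rw [hMM]
      _ = (2:ℝ)^(-s) * (m:ℝ)^((2:ℝ)-D) := by rw [hE2]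
  have hcard : (Finset.Icc M (2*M)).card = M + 1 := by
    rw [Nat.card_Icc]
    omega
  have hlowsum : (M:ℝ) * b ≤ ∑ n ∈ Finset.Icc M (2*M), convPow μ n x := by
    have h := Finset.card_nsmul_le_sum (Finset.Icc M (2*M)) (fun n => convPow μ n x) b hlow1
    rw [hcard, nsmul_eq_mul] at h
    refine le_trans ?_ h
    have hM1' : ((M:ℝ)) ≤ ((M+1 : ℕ):ℝ) := by push_cast; linarith
    exact mul_le_mul_of_nonneg_right hM1' hb0.le
  have hsum_le : ∑ n ∈ Finset.Icc M (2*M), convPow μ n x ≤ green μ 1 x := by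
    rw [hgreen]
    exact Summable.sum_le_tsum _ (fun i _ => hnonneg x i) hsummable
  have hMb : (M:ℝ) * b = (1/c) * 2^(-s) * Real.exp (-(c/2)) * (m:ℝ)^((2:ℝ)-D) := by
    rw [hb]
    calc (M:ℝ) * (1/c * (2*(M:ℝ))^(-s) * Real.exp (-(c/2)))
        = (1/c) * Real.exp (-(c/2)) * ((M:ℝ) * (2*(M:ℝ))^(-s)) := by ring
      _ = (1/c) * Real.exp (-(c/2)) * ((2:ℝ)^(-s) * (m:ℝ)^((2:ℝ)-D)) := by rw [hE3]
      _ = (1/c) * 2^(-s) * Real.exp (-(c/2)) * (m:ℝ)^((2:ℝ)-D) := by ring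
  have hClowinv : 1/Clow = (1/c) * 2^(-s) * Real.exp (-(c/2)) := by
    have h2s : ((2:ℝ)^s) ≠ 0 := (Real.rpow_pos_of_pos two_pos s).ne'
    rw [hClow, Real.rpow_neg (by norm_num : (0:ℝ) ≤ 2), Real.exp_neg]
    field_simp
  have hlower : (1/(1+Cup+Clow)) * (m:ℝ)^((2:ℝ)-D) ≤ green μ 1 x := by
    have h1 : 1/(1+Cup+Clow) ≤ 1/Clow := by
      apply one_div_le_one_div_of_le hClow0
      linarith
    have hmp : (0:ℝ) ≤ (m:ℝ)^((2:ℝ)-D) := Real.rpow_nonneg hm0.le _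
    calc (1/(1+Cup+Clow)) * (m:ℝ)^((2:ℝ)-D)
        ≤ (1/Clow) * (m:ℝ)^((2:ℝ)-D) := mul_le_mul_of_nonneg_right h1 hmp
      _ = (M:ℝ) * b := by rw [hClowinv, ← hMb]
      _ ≤ ∑ n ∈ Finset.Icc M (2*M), convPow μ n x := hlowsum
      _ ≤ green μ 1 x := hsum_le
  exact ⟨hlower, hupper⟩

end GreenGrowth
end
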